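/- For the standard words of the Fibonacci slope Φ = [0;2,1,1,…], s_{3k+4} = (∏_{i=0}^{k} (s̃_{3i+2})²) · t_{k+1} for all k ≥ 0, where t_j = 01 if j even, 10 if j odd. Consequently the Fibonacci word c_Φ equals the infinite product ∏_{i=0}^{∞} (s̃_{3i+2})², and its square root is ∏_{i=0}^{∞} s̃_{3i+2}. -/

import Mathlib

/-!
Write `s_{k+2} = p_k t_{k+1}` with `p_k` (`fwPal k`) a palindrome; then `s_k s_{k+1} = p_k t_k`
and `s̃_{k+2} = t_k p_k`. If `s_{3k+4} = P t_{k+1}`, then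
`s_{3k+7} = s_{3k+4} (s_{3k+3} s_{3k+4}) (s_{3k+4} s_{3k+3}) = P (t_{k+1} p_{3k+3})² t_k`,
and `t_{k+1} p_{3k+3} = s̃_{3k+5}`.

For the square root, `s̃_{3i+2}` is cut into the blocks `0, 01, 10, 010, 100, 10010`, each the
root of a minimal square. The cube of the reversed Fibonacci morphism `0 ↦ 10, 1 ↦ 0` maps
`s̃_{3i+2}` to `s̃_{3i+5}` and each block to a word of blocks `X₁⋯X_n` with
`X₁²⋯X_n² = (X₁⋯X_n)²`, so by induction the squares of the blocks of `s̃_{3i+2}` multiply to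
`(s̃_{3i+2})²`. This gives a factorization of `c_Φ` into minimal squares, and there is only one.
-/

/-- The standard (Fibonacci) words of slope `Φ = [0;2,1,1,…]`:
`s₀ = 0`, `s₁ = 01`, `s_k = s_{k−1} s_{k−2}`. -/
def fw : ℕ → List Bool
  | 0 => [false]
  | 1 => [false, true]
  | k + 2 => fw (k + 1) ++ fw k

/-- `t_k = 01` if `k` is even, `t_k = 10` if `k` is odd. -/
def tk (k : ℕ) : List Bool := if k % 2 = 0 then [false, true] else [true, false]


/-- `w` is a prefix of the infinite word `s`. -/
def IsPref (w : List Bool) (s : ℕ → Bool) : Prop :=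
  ∀ i, i < w.length → w.getD i false = s i

/-- The infinite Fibonacci word `c_Φ = lim s_k`. -/
def cFib (n : ℕ) : Bool := (fw (n + 1)).getD n false

open List

lemma tk_add_two (k : ℕ) : tk (k + 2) = tk k := by
  simp [tk, Nat.add_mod_right]

lemma tk_congr {m n : ℕ} (h : m % 2 = n % 2) : tk m = tk n := by
  simp only [tk, h]

lemma reverse_tk (k : ℕ) : (tk k).reverse = tk (k + 1) := by
  rcases Nat.mod_two_eq_zero_or_one k with h | h <;> simp [tk, h, Nat.succ_mod_two_eq_zero_iff]

def fwPal : ℕ → List Bool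
  | 0 => [false]
  | 1 => [false, true, false]
  | k + 2 => fwPal (k + 1) ++ tk k ++ fwPal k

lemma fwPal_add_two' : ∀ k, fwPal k ++ tk (k + 1) ++ fwPal (k + 1) = fwPal (k + 2)
  | 0 => by decide
  | k + 1 => by
    conv_lhs => rw [tk_add_two, ← fwPal_add_two' k]
    show _ = fwPal (k + 1) ++ tk k ++ fwPal k ++ tk (k + 1) ++ fwPal (k + 1)
    simp only [append_assoc]

lemma reverse_fwPal : ∀ k, (fwPal k).reverse = fwPal k
  | 0 => rfl
  | 1 => rfl
  | k + 2 => by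
    show (fwPal (k + 1) ++ tk k ++ fwPal k).reverse = _
    rw [reverse_append, reverse_append, reverse_fwPal k, reverse_fwPal (k + 1), reverse_tk,
      ← append_assoc, fwPal_add_two']

lemma fw_add_two : ∀ k, fw (k + 2) = fwPal k ++ tk (k + 1)
  | 0 => rfl
  | 1 => rfl
  | k + 2 => by
    show fw (k + 3) ++ fw (k + 2) = fwPal (k + 1) ++ tk k ++ fwPal k ++ tk (k + 3)
    rw [fw_add_two (k + 1), fw_add_two k, tk_add_two, tk_add_two]
    simp only [append_assoc]

lemma reverse_fw_add_two (k : ℕ) : (fw (k + 2)).reverse = tk k ++ fwPal k := by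
  rw [fw_add_two, reverse_append, reverse_fwPal, reverse_tk, tk_add_two]

lemma fw_append_fw_succ : ∀ k, fw k ++ fw (k + 1) = fwPal k ++ tk k
  | 0 => rfl
  | 1 => rfl
  | k + 2 => by
    rw [fw_add_two k, fw_add_two (k + 1), tk_add_two, ← fwPal_add_two']
    simp only [append_assoc]

theorem fw_three_mul_add_four (k : ℕ) : fw (3 * k + 4) =
    flatten ((range (k + 1)).map fun i => (fw (3 * i + 2)).reverse ++ (fw (3 * i + 2)).reverse)
      ++ tk (k + 1) := by
  induction k with
  | zero => decide
  | succ k ih =>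
    set a := fw (3 * k + 3)
    set b := fw (3 * k + 4)
    have hunfold : fw (3 * (k + 1) + 4) = b ++ (a ++ b) ++ (b ++ a) := by
      show ((b ++ a) ++ b) ++ (b ++ a) = _
      simp only [append_assoc]
    have hab : a ++ b = fwPal (3 * k + 3) ++ tk (k + 1) := by
      rw [fw_append_fw_succ, tk_congr (m := 3 * k + 3) (n := k + 1) (by omega)]
    have hba : b ++ a = fwPal (3 * k + 3) ++ tk (k + 2) := by
      rw [tk_congr (m := k + 2) (n := 3 * k + 4) (by omega)]
      exact fw_add_two (3 * k + 3)
    have hrev : (fw (3 * (k + 1) + 2)).reverse = tk (k + 1) ++ fwPal (3 * k + 3) := by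
      rw [show 3 * (k + 1) + 2 = 3 * k + 3 + 2 by ring, reverse_fw_add_two,
        tk_congr (m := 3 * k + 3) (n := k + 1) (by omega)]
    rw [hunfold, hab, hba, ih, range_succ (n := k + 1), map_append, flatten_append, map_singleton,
      flatten_singleton, hrev]
    simp only [append_assoc]

lemma isPref_iff_getElem {w : List Bool} {s : ℕ → Bool} :
    IsPref w s ↔ ∀ i (hi : i < w.length), w[i] = s i :=
  forall_congr' fun _ => ⟨fun h hi => getD_eq_getElem w false hi ▸ h hi,
    fun h hi => (getD_eq_getElem w false hi).trans (h hi)⟩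

lemma IsPref.of_prefix {w w' : List Bool} {s : ℕ → Bool} (h : w <+: w') (h' : IsPref w' s) :
    IsPref w s := by
  rw [isPref_iff_getElem] at h' ⊢
  intro i hi
  rw [h.getElem hi]
  exact h' i _

lemma IsPref.prefix_of_length_le {u v : List Bool} {s : ℕ → Bool} (hu : IsPref u s)
    (hv : IsPref v s) (h : u.length ≤ v.length) : u <+: v := by
  rw [isPref_iff_getElem] at hu hv
  rw [prefix_iff_eq_take]
  refine ext_getElem (by simp [h]) fun i hi _ => ?_
  rw [getElem_take, hu i hi, hv i (by omega)]

lemma fw_prefix_fw_succ : ∀ k, fw k <+: fw (k + 1)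
  | 0 => by decide
  | _ + 1 => prefix_append _ _

lemma fw_prefix_fw {m n : ℕ} (h : m ≤ n) : fw m <+: fw n := by
  induction n, h using Nat.le_induction with
  | base => exact prefix_refl _
  | succ n _ ih => exact ih.trans (fw_prefix_fw_succ n)

lemma lt_length_fw : ∀ k, k < (fw k).length
  | 0 => by decide
  | 1 => by decide
  | k + 2 => by
    have := lt_length_fw k
    have := lt_length_fw (k + 1)
    simp only [fw, length_append]
    omega

lemma isPref_fw_cFib (n : ℕ) : IsPref (fw n) cFib := by
  rw [isPref_iff_getElem]
  intro i hi
  have hi' : i < (fw (i + 1)).length := (lt_length_fw (i + 1)).trans' (by omega)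
  rw [cFib, getD_eq_getElem _ _ hi', (fw_prefix_fw (le_max_left n (i + 1))).getElem hi,
    (fw_prefix_fw (le_max_right n (i + 1))).getElem hi']

theorem isPref_flatten_sq_reverse_fw (k : ℕ) : IsPref
    (flatten ((range k).map fun i => (fw (3 * i + 2)).reverse ++ (fw (3 * i + 2)).reverse))
    cFib := by
  cases k with
  | zero => simp [IsPref]
  | succ k => exact (isPref_fw_cFib (3 * k + 4)).of_prefix ⟨_, (fw_three_mul_add_four k).symm⟩

def IsMinSquareRoot {α : Type*} (w : List α) : Prop :=
  ∀ v : List α, v ≠ [] → v ++ v <+: w ++ w → v = w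

lemma isMinSquareRoot_of_forall_take {α : Type*} [DecidableEq α] {w : List α}
    (h : ∀ k < w.length, 0 < k → ¬ w.take k ++ w.take k <+: w ++ w) : IsMinSquareRoot w := by
  intro v hv hvw
  have hlen : v.length ≤ w.length := by
    have := hvw.length_le
    simp only [length_append] at this
    omega
  have hv_w : v <+: w :=
    prefix_of_prefix_length_le ((prefix_append v v).trans hvw) (prefix_append w w) hlen
  refine hv_w.eq_of_length (hlen.eq_or_lt.resolve_right fun hlt => ?_)
  rw [prefix_iff_eq_take.mp hv_w] at hvw
  exact h _ hlt (length_pos_iff.mpr hv) hvw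

/-- Of two minimal squares at the same position of `s`, the shorter is a prefix of the longer,
hence equal to it. -/
theorem eq_of_minSquare_factorizations {s : ℕ → Bool} {X Y : ℕ → List Bool}
    (hX : ∀ n, X n ≠ []) (hXmin : ∀ n, IsMinSquareRoot (X n))
    (hXs : ∀ n, IsPref (flatten ((range n).map fun i => X i ++ X i)) s)
    (hY : ∀ n, Y n ≠ []) (hYmin : ∀ n, IsMinSquareRoot (Y n))
    (hYs : ∀ n, IsPref (flatten ((range n).map fun i => Y i ++ Y i)) s) : X = Y := by
  funext m
  induction m using Nat.strong_induction_on with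
  | _ m ih =>
    have hpre : flatten ((range m).map fun i => X i ++ X i)
        = flatten ((range m).map fun i => Y i ++ Y i) :=
      congrArg flatten (map_congr_left fun i hi => by rw [ih i (mem_range.mp hi)])
    have hXm := hXs (m + 1)
    have hYm := hYs (m + 1)
    simp only [range_succ, map_append, flatten_append, map_singleton, flatten_singleton,
      hpre] at hXm hYm
    rcases le_total (X m ++ X m).length (Y m ++ Y m).length with h | h
    · exact hYmin m (X m) (hX m) ((prefix_append_right_inj _).mp (hXm.prefix_of_length_le hYm
        (by simpa using h)))
    · exact (hXmin m (Y m) (hY m) ((prefix_append_right_inj _).mp (hYm.prefix_of_length_le hXm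
        (by simpa using h)))).symm

def fibMorph (b : Bool) : List Bool := if b then [false] else [false, true]

def fibMorphCube (b : Bool) : List Bool := ((fibMorph b).flatMap fibMorph).flatMap fibMorph

lemma fw_succ : ∀ k, fw (k + 1) = (fw k).flatMap fibMorph
  | 0 => rfl
  | 1 => rfl
  | k + 2 => by
    show fw (k + 2) ++ fw (k + 1) = (fw (k + 1) ++ fw k).flatMap fibMorph
    rw [flatMap_append, ← fw_succ, ← fw_succ]

lemma reverse_fw_add_three (k : ℕ) :
    (fw (k + 3)).reverse = (fw k).reverse.flatMap (reverse ∘ fibMorphCube) := by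
  rw [fw_succ, fw_succ, fw_succ, flatMap_assoc, flatMap_assoc, reverse_flatMap]
  congr 2
  funext b
  cases b <;> rfl

def block : Fin 6 → List Bool :=
  ![[false], [false, true], [true, false], [false, true, false], [true, false, false],
    [true, false, false, true, false]]

def blockSubst : Fin 6 → List (Fin 6) :=
  ![[5], [4, 2, 3], [1, 0, 5], [4, 2, 1, 0, 5], [1, 0, 2, 3, 5], [1, 0, 2, 3, 4, 2, 1, 0, 5]]

def decode (l : List (Fin 6)) : List Bool := l.flatMap block

def decodeSq (l : List (Fin 6)) : List Bool := l.flatMap fun x => block x ++ block x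

lemma block_ne_nil : ∀ x, block x ≠ [] := by decide

lemma isMinSquareRoot_block (x : Fin 6) : IsMinSquareRoot (block x) :=
  isMinSquareRoot_of_forall_take (by revert x; decide)

lemma decode_blockSubst :
    ∀ x, decode (blockSubst x) = (block x).flatMap (reverse ∘ fibMorphCube) := by
  decide

lemma decodeSq_blockSubst :
    ∀ x, decodeSq (blockSubst x) = decode (blockSubst x) ++ decode (blockSubst x) := by
  decide

lemma decode_flatMap_blockSubst (l : List (Fin 6)) :
    decode (l.flatMap blockSubst) = (decode l).flatMap (reverse ∘ fibMorphCube) := by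
  simp only [decode, flatMap_assoc]
  exact congrArg (l.flatMap ·) (funext decode_blockSubst)

lemma decodeSq_flatMap_blockSubst (l : List (Fin 6)) :
    decodeSq (l.flatMap blockSubst) = (decodeSq l).flatMap (reverse ∘ fibMorphCube) := by
  simp only [decodeSq, flatMap_assoc, flatMap_append]
  refine congrArg (l.flatMap ·) (funext fun x => ?_)
  rw [← decode_blockSubst, ← decodeSq_blockSubst]
  rfl

def blockWord : ℕ → List (Fin 6)
  | 0 => [3]
  | i + 1 => (blockWord i).flatMap blockSubst

lemma decode_blockWord : ∀ i, decode (blockWord i) = (fw (3 * i + 2)).reverse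
  | 0 => rfl
  | i + 1 => by
    rw [blockWord, decode_flatMap_blockSubst, decode_blockWord i, ← reverse_fw_add_three]
    rfl

lemma decodeSq_blockWord :
    ∀ i, decodeSq (blockWord i) = decode (blockWord i) ++ decode (blockWord i)
  | 0 => rfl
  | i + 1 => by
    rw [blockWord, decodeSq_flatMap_blockSubst, decodeSq_blockWord i, flatMap_append,
      decode_flatMap_blockSubst]

def blockPrefix (n : ℕ) : List (Fin 6) := (range n).flatMap blockWord

lemma blockPrefix_succ (n : ℕ) : blockPrefix (n + 1) = blockPrefix n ++ blockWord n := by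
  simp [blockPrefix, range_succ]

lemma blockPrefix_prefix {m n : ℕ} (h : m ≤ n) : blockPrefix m <+: blockPrefix n := by
  induction n, h using Nat.le_induction with
  | base => exact prefix_refl _
  | succ n _ ih => exact ih.trans ⟨blockWord n, (blockPrefix_succ n).symm⟩

lemma blockWord_ne_nil (i : ℕ) : blockWord i ≠ [] := by
  intro h
  have := decode_blockWord i
  rw [h, decode, flatMap_nil, eq_comm, reverse_eq_nil_iff] at this
  exact absurd (lt_length_fw (3 * i + 2)) (by simp [this])

lemma le_length_blockPrefix : ∀ n, n ≤ (blockPrefix n).length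
  | 0 => Nat.zero_le _
  | n + 1 => by
    rw [blockPrefix_succ, length_append]
    have := le_length_blockPrefix n
    have := length_pos_iff.mpr (blockWord_ne_nil n)
    omega

lemma decode_blockPrefix (n : ℕ) :
    decode (blockPrefix n) = flatten ((range n).map fun i => (fw (3 * i + 2)).reverse) := by
  rw [decode, blockPrefix, flatMap_assoc, flatMap_def]
  exact congrArg (fun f => flatten ((range n).map f)) (funext decode_blockWord)

lemma decodeSq_blockPrefix (n : ℕ) : decodeSq (blockPrefix n) =
    flatten ((range n).map fun i => (fw (3 * i + 2)).reverse ++ (fw (3 * i + 2)).reverse) := by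
  rw [decodeSq, blockPrefix, flatMap_assoc, flatMap_def]
  refine congrArg (fun f => flatten ((range n).map f)) (funext fun i => ?_)
  rw [← decodeSq, decodeSq_blockWord, decode_blockWord]

/-- `blockPrefix (m + 1)` has more than `m` letters, so the default `0` is never used. -/
def fibBlock (m : ℕ) : Fin 6 := (blockPrefix (m + 1)).getD m 0

lemma take_blockPrefix {m n : ℕ} (h : m ≤ (blockPrefix n).length) :
    (blockPrefix n).take m = (range m).map fibBlock := by
  refine ext_getElem (by simpa using h) fun i hi _ => ?_
  have hi' : i < (blockPrefix n).length := by simp at hi; omega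
  have hi₁ : i < (blockPrefix (i + 1)).length :=
    (le_length_blockPrefix (i + 1)).trans_lt' (by omega)
  rw [getElem_take, getElem_map, getElem_range, fibBlock, getD_eq_getElem _ _ hi₁]
  rcases le_total n (i + 1) with hn | hn
  · exact (blockPrefix_prefix hn).getElem hi'
  · exact ((blockPrefix_prefix hn).getElem hi₁).symm

def fibRoot (m : ℕ) : List Bool := block (fibBlock m)

lemma flatten_map_fibRoot {m n : ℕ} (h : m ≤ (blockPrefix n).length) :
    flatten ((range m).map fibRoot) = decode ((blockPrefix n).take m) := by
  rw [take_blockPrefix h, decode, flatMap_map, flatMap_def]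
  rfl

lemma flatten_map_fibRoot_sq {m n : ℕ} (h : m ≤ (blockPrefix n).length) :
    flatten ((range m).map fun i => fibRoot i ++ fibRoot i) =
      decodeSq ((blockPrefix n).take m) := by
  rw [take_blockPrefix h, decodeSq, flatMap_map, flatMap_def]
  rfl

lemma isPref_flatten_map_fibRoot_sq (n : ℕ) :
    IsPref (flatten ((range n).map fun i => fibRoot i ++ fibRoot i)) cFib := by
  rw [flatten_map_fibRoot_sq (le_length_blockPrefix n)]
  refine (isPref_flatten_sq_reverse_fw n).of_prefix ?_
  rw [← decodeSq_blockPrefix]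
  exact (take_prefix n _).flatMap _

/-- `s_{3k+4} = (∏_{i=0}^{k} (s̃_{3i+2})²) · t_{k+1}` for all `k ≥ 0`;
consequently the Fibonacci word `c_Φ` equals the infinite product
`∏_{i=0}^{∞} (s̃_{3i+2})²`, and its square root (obtained from any factorization of
`c_Φ` into minimal squares `X₁²X₂²⋯` as `X₁X₂⋯`) is `∏_{i=0}^{∞} s̃_{3i+2}`. -/
theorem fibonacci_square_root :
    (∀ k : ℕ, fw (3 * k + 4) =
      List.flatten ((List.range (k + 1)).map fun i =>
        (fw (3 * i + 2)).reverse ++ (fw (3 * i + 2)).reverse) ++ tk (k + 1)) ∧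
    (∀ k : ℕ, IsPref
      (List.flatten ((List.range k).map fun i =>
        (fw (3 * i + 2)).reverse ++ (fw (3 * i + 2)).reverse)) cFib) ∧
    (∀ X : ℕ → List Bool, (∀ n, X n ≠ []) →
      (∀ n, ∀ v : List Bool, v ≠ [] → (v ++ v) <+: (X n ++ X n) → v = X n) →
      (∀ n, IsPref (List.flatten ((List.range n).map fun i => X i ++ X i)) cFib) →
      (∀ m : ℕ, ∃ n : ℕ, List.flatten ((List.range m).map X) <+:
          List.flatten ((List.range n).map fun i => (fw (3 * i + 2)).reverse)) ∧
      (∀ n : ℕ, ∃ m : ℕ,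
          List.flatten ((List.range n).map fun i => (fw (3 * i + 2)).reverse) <+:
            List.flatten ((List.range m).map X))) := by
  refine ⟨fw_three_mul_add_four, isPref_flatten_sq_reverse_fw, fun X hX hXmin hXs => ?_⟩
  obtain rfl : X = fibRoot := eq_of_minSquare_factorizations hX hXmin hXs
    (fun _ => block_ne_nil _) (fun _ => isMinSquareRoot_block _) isPref_flatten_map_fibRoot_sq
  refine ⟨fun m => ⟨m, ?_⟩, fun n => ⟨(blockPrefix n).length, ?_⟩⟩
  · rw [flatten_map_fibRoot (le_length_blockPrefix m), ← decode_blockPrefix]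
    exact (take_prefix m _).flatMap _
  · rw [flatten_map_fibRoot le_rfl, take_length, decode_blockPrefix]
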